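/- Let n ≥ 2 and let u be a harmonic function on the open unit ball of ℝ^{n+1}. Define v on the open upper half-space {z_{n+1} > 0} by v(z) = (4/((2 + z_{n+1})² + |z̄|²))^{(n-1)/2} · u(Σ^{-1}(z)). Then v is harmonic on the open upper half-space. -/

import Mathlib

open MeasureTheory Metric Filter

noncomputable section

/-- The Euclidean Laplacian of a function on `ℝ^m`. -/
def lap {m : ℕ} (u : EuclideanSpace ℝ (Fin m) → ℝ) (x : EuclideanSpace ℝ (Fin m)) : ℝ :=
  ∑ i, fderiv ℝ (fun y => fderiv ℝ u y (EuclideanSpace.single i 1)) x (EuclideanSpace.single i 1)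

/-- The inverse map `Σ⁻¹ : ℝ^{n+1}_+ → B^{n+1} ∖ {S}`. -/
def SigmaInv (n : ℕ) (z : EuclideanSpace ℝ (Fin (n + 1))) : EuclideanSpace ℝ (Fin (n + 1)) :=
  (EuclideanSpace.equiv (Fin (n + 1)) ℝ).symm (fun j =>
    if j = Fin.last n then
      (4 - z (Fin.last n) ^ 2 - ∑ i : Fin n, z (Fin.castSucc i) ^ 2) /
        ((∑ i : Fin n, z (Fin.castSucc i) ^ 2) + (2 + z (Fin.last n)) ^ 2)
    else
      4 * z j / ((∑ i : Fin n, z (Fin.castSucc i) ^ 2) + (2 + z (Fin.last n)) ^ 2))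

/-- The conformal factor `4/((2 + z_{n+1})² + |z̄|²)` of `Σ⁻¹`. -/
def confFactor (n : ℕ) (z : EuclideanSpace ℝ (Fin (n + 1))) : ℝ :=
  4 / ((2 + z (Fin.last n)) ^ 2 + ∑ i : Fin n, z (Fin.castSucc i) ^ 2)

open RealInnerProductSpace

variable {n : ℕ}

abbrev Eu (n : ℕ) := EuclideanSpace ℝ (Fin (n+1))

def ee (n : ℕ) : Eu n := EuclideanSpace.single (Fin.last n) 1

def Wf (n : ℕ) (z : Eu n) : Eu n := z + (2:ℝ) • ee n

def df (n : ℕ) (z : Eu n) : ℝ := ⟪Wf n z, Wf n z⟫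

def Ff (n : ℕ) (z : Eu n) : Eu n := (4 * (df n z)⁻¹) • Wf n z - ee n

lemma Wf_apply (z : Eu n) (i : Fin (n+1)) :
    Wf n z i = z i + if i = Fin.last n then 2 else 0 := by
  simp [Wf, ee, EuclideanSpace.single_apply]

lemma df_eq (z : Eu n) :
    df n z = (∑ i : Fin n, z (Fin.castSucc i) ^ 2) + (2 + z (Fin.last n)) ^ 2 := by
  have : df n z = ∑ i, (Wf n z i)^2 := by
    simp [df, PiLp.inner_apply, sq, RCLike.inner_apply, -inner_self_eq_norm_sq_to_K]
  rw [this, Fin.sum_univ_castSucc]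
  have h1 : ∀ i : Fin n, Wf n z (Fin.castSucc i) = z (Fin.castSucc i) := by
    intro i
    rw [Wf_apply]
    simp [Fin.ext_iff, Fin.castSucc]
    omega
  have h2 : Wf n z (Fin.last n) = z (Fin.last n) + 2 := by rw [Wf_apply]; simp
  simp only [h1, h2]
  ring

lemma confFactor_eq (z : Eu n) : confFactor n z = 4 * (df n z)⁻¹ := by
  rw [confFactor, df_eq, div_eq_mul_inv, add_comm]

lemma df_ge (z : Eu n) (hz : 0 ≤ z (Fin.last n)) : 4 ≤ df n z := by
  rw [df_eq]
  have h1 : 0 ≤ ∑ i : Fin n, z (Fin.castSucc i) ^ 2 := by positivity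
  nlinarith [z (Fin.last n), hz]

lemma SigmaInv_apply (z : Eu n) (j : Fin (n+1)) :
    SigmaInv n z j = if j = Fin.last n then
      (4 - z (Fin.last n) ^ 2 - ∑ i : Fin n, z (Fin.castSucc i) ^ 2) /
        ((∑ i : Fin n, z (Fin.castSucc i) ^ 2) + (2 + z (Fin.last n)) ^ 2)
    else
      4 * z j / ((∑ i : Fin n, z (Fin.castSucc i) ^ 2) + (2 + z (Fin.last n)) ^ 2) := rfl

lemma Ff_apply (z : Eu n) (j : Fin (n+1)) :
    Ff n z j = 4 * (df n z)⁻¹ * Wf n z j - if j = Fin.last n then 1 else 0 := by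
  simp [Ff, ee, EuclideanSpace.single_apply]

lemma SigmaInv_eq (z : Eu n) (hz : df n z ≠ 0) : SigmaInv n z = Ff n z := by
  have hd := df_eq z
  ext j
  rw [SigmaInv_apply, Ff_apply, Wf_apply]
  by_cases hj : j = Fin.last n
  · subst hj
    simp only [↓reduceIte]
    rw [← hd, div_eq_iff hz]
    field_simp
    rw [hd]
    ring
  · simp only [if_neg hj]
    rw [div_eq_mul_inv, ← hd]
    ring

lemma inner_Wf_ee (z : Eu n) : ⟪Wf n z, ee n⟫ = z (Fin.last n) + 2 := by
  simp [ee, EuclideanSpace.inner_single_right, Wf_apply]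

lemma inner_ee_ee : ⟪ee n, ee n⟫ = (1:ℝ) := by
  simp [ee, EuclideanSpace.inner_single_right, EuclideanSpace.single_apply]

lemma df_pos (z : Eu n) (hz : 0 ≤ z (Fin.last n)) : 0 < df n z :=
  lt_of_lt_of_le (by norm_num) (df_ge z hz)

lemma Ff_mem_ball (z : Eu n) (hz : 0 < z (Fin.last n)) : Ff n z ∈ ball (0 : Eu n) 1 := by
  have hd : 0 < df n z := df_pos z hz.le
  have hnorm : ‖Ff n z‖^2 = 1 - 8 * z (Fin.last n) / df n z := by
    rw [← real_inner_self_eq_norm_sq]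
    rw [Ff]
    rw [inner_sub_sub_self]
    have hWe : (inner ℝ (Wf n z) (ee n) : ℝ) = z (Fin.last n) + 2 := inner_Wf_ee z
    have heW : (inner ℝ (ee n) (Wf n z) : ℝ) = z (Fin.last n) + 2 := by
      rw [real_inner_comm]; exact hWe
    simp only [real_inner_smul_left, real_inner_smul_right, hWe, heW, inner_ee_ee]
    rw [show ⟪Wf n z, Wf n z⟫ = df n z from rfl]
    field_simp
    ring
  have h8 : 0 < 8 * z (Fin.last n) / df n z := by positivity
  have : ‖Ff n z‖^2 < 1 := by rw [hnorm]; linarith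
  have h0 : 0 ≤ ‖Ff n z‖ := norm_nonneg _
  rw [mem_ball, dist_zero_right]
  nlinarith

def rr (n : ℕ) : ℝ := ((n:ℝ)-1)/2

def Gf (n : ℕ) (z : Eu n) : ℝ := (4 * (df n z)⁻¹) ^ rr n

def gam (n : ℕ) (z : Eu n) : ℝ := -(2 * rr n) * Gf n z * (df n z)⁻¹

def Ff' (n : ℕ) (z : Eu n) : Eu n →L[ℝ] Eu n :=
  (4 * (df n z)⁻¹) • ContinuousLinearMap.id ℝ (Eu n) +
    ((-8 * ((df n z)⁻¹)^2) • innerSL ℝ (Wf n z)).smulRight (Wf n z)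

lemma Ff'_apply (z : Eu n) (v : Eu n) :
    Ff' n z v = (4 * (df n z)⁻¹) • v + (-8 * ((df n z)⁻¹)^2 * ⟪Wf n z, v⟫) • Wf n z := by
  simp [Ff', ContinuousLinearMap.smulRight_apply, smul_smul]

lemma hasFDerivAt_Wf (y : Eu n) :
    HasFDerivAt (Wf n) (ContinuousLinearMap.id ℝ (Eu n)) y := by
  exact (hasFDerivAt_id (𝕜 := ℝ) y).add_const ((2:ℝ) • ee n)

lemma hasFDerivAt_df (y : Eu n) :
    HasFDerivAt (df n) ((2:ℝ) • innerSL ℝ (Wf n y)) y := by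
  have h := (hasFDerivAt_Wf y).inner ℝ (hasFDerivAt_Wf y)
  refine h.congr_fderiv (Eq.symm ?_)
  ext v
  simp [fderivInnerCLM_apply, real_inner_comm, two_smul]

lemma hasFDerivAt_dinv (y : Eu n) (hy : df n y ≠ 0) :
    HasFDerivAt (fun x => (df n x)⁻¹) ((-2 * ((df n y)⁻¹)^2) • innerSL ℝ (Wf n y)) y := by
  have h := (hasFDerivAt_inv hy).comp y (hasFDerivAt_df y)
  refine h.congr_fderiv (Eq.symm ?_)
  refine ContinuousLinearMap.ext fun v => ?_
  simp only [ContinuousLinearMap.smul_apply, innerSL_apply_apply, smul_eq_mul,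
    ContinuousLinearMap.comp_apply, ContinuousLinearMap.smulRight_apply,
    ContinuousLinearMap.one_apply, ContinuousLinearMap.toSpanSingleton_apply]
  field_simp

lemma hasFDerivAt_Ff (y : Eu n) (hy : df n y ≠ 0) :
    HasFDerivAt (Ff n) (Ff' n y) y := by
  have hc : HasFDerivAt (fun x => 4 * (df n x)⁻¹)
      ((4:ℝ) • ((-2 * ((df n y)⁻¹)^2) • innerSL ℝ (Wf n y))) y :=
    (hasFDerivAt_dinv y hy).const_mul 4
  have h := (hc.smul (hasFDerivAt_Wf y)).sub_const (ee n)
  refine h.congr_fderiv (Eq.symm ?_)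
  refine ContinuousLinearMap.ext fun v => ?_
  rw [Ff'_apply]
  simp only [ContinuousLinearMap.add_apply, ContinuousLinearMap.smul_apply,
    ContinuousLinearMap.smulRight_apply, ContinuousLinearMap.id_apply, innerSL_apply_apply,
    smul_eq_mul]
  module

lemma hasFDerivAt_Gf (y : Eu n) (hy : 0 < df n y) :
    HasFDerivAt (Gf n) ((gam n y) • innerSL ℝ (Wf n y)) y := by
  have hne : 4 * (df n y)⁻¹ ≠ 0 := by positivity
  have hc : HasFDerivAt (fun x => 4 * (df n x)⁻¹)
      ((4:ℝ) • ((-2 * ((df n y)⁻¹)^2) • innerSL ℝ (Wf n y))) y :=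
    (hasFDerivAt_dinv y hy.ne').const_mul 4
  have h := hc.rpow_const (p := rr n) (Or.inl hne)
  refine h.congr_fderiv (Eq.symm ?_)
  have hpow : (4 * (df n y)⁻¹) ^ (rr n - 1) = Gf n y * (4 * (df n y)⁻¹)⁻¹ := by
    rw [Real.rpow_sub (by positivity), Real.rpow_one, Gf, div_eq_mul_inv]
  ext v
  simp only [ContinuousLinearMap.smul_apply, innerSL_apply_apply, smul_eq_mul, hpow, gam]
  have hd : (df n y) ≠ 0 := hy.ne'
  field_simp

def dgam (n : ℕ) (y : Eu n) : ℝ :=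
  -(2 * rr n) * (Gf n y * (-2 * ((df n y)⁻¹)^2) + (df n y)⁻¹ * gam n y)

lemma hasFDerivAt_gam (y : Eu n) (hy : 0 < df n y) :
    HasFDerivAt (gam n) ((dgam n y) • innerSL ℝ (Wf n y)) y := by
  have h := ((hasFDerivAt_Gf y hy).mul (hasFDerivAt_dinv y hy.ne')).const_mul (-(2 * rr n))
  have hfun : gam n = fun x => -(2 * rr n) * (Gf n x * (df n x)⁻¹) := by
    funext x; rw [gam]; ring
  rw [hfun]
  refine h.congr_fderiv (Eq.symm ?_)
  refine ContinuousLinearMap.ext fun v => ?_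
  simp only [ContinuousLinearMap.smul_apply, ContinuousLinearMap.add_apply, innerSL_apply_apply,
    smul_eq_mul, dgam]
  ring

lemma hasFDerivAt_innerW (y : Eu n) (b : Eu n) :
    HasFDerivAt (fun x => ⟪Wf n x, b⟫) (innerSL ℝ b) y := by
  have h := (hasFDerivAt_Wf y).inner ℝ (hasFDerivAt_const b y)
  refine h.congr_fderiv (Eq.symm ?_)
  refine ContinuousLinearMap.ext fun v => ?_
  simp [fderivInnerCLM_apply, real_inner_comm]

lemma inner_bb (i : Fin (n+1)) :
    ⟪(EuclideanSpace.single i 1 : Eu n), EuclideanSpace.single i 1⟫ = (1:ℝ) := by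
  rw [EuclideanSpace.inner_single_right]
  simp

lemma inner_W_single (z : Eu n) (i : Fin (n+1)) :
    ⟪Wf n z, (EuclideanSpace.single i 1 : Eu n)⟫ = Wf n z i := by
  rw [EuclideanSpace.inner_single_right]
  simp

lemma sum_single_apply (L : Eu n →L[ℝ] ℝ) (x : Eu n) :
    ∑ i, x i * L (EuclideanSpace.single i 1) = L x := by
  have hx : (∑ i, x i • (EuclideanSpace.single i 1 : Eu n)) = x := by
    ext j
    rw [show ((∑ i, x i • (EuclideanSpace.single i 1 : Eu n))) j
        = ∑ i, (x i • (EuclideanSpace.single i 1 : Eu n)) j by rw [WithLp.ofLp_sum, Finset.sum_apply]]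
    simp [EuclideanSpace.single_apply]
  calc ∑ i, x i * L (EuclideanSpace.single i 1)
      = ∑ i, L (x i • EuclideanSpace.single i 1) := by simp
    _ = L (∑ i, x i • (EuclideanSpace.single i 1 : Eu n)) := (map_sum L _ _).symm
    _ = L x := by rw [hx]

lemma sum_W_sq (z : Eu n) : ∑ i, Wf n z i * Wf n z i = df n z := by
  simp [df, PiLp.inner_apply, RCLike.inner_apply, -inner_self_eq_norm_sq_to_K]

section withU

variable (u : Eu n → ℝ)

def Dv (n : ℕ) (u : Eu n → ℝ) (y : Eu n) : Eu n →L[ℝ] ℝ :=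
  Gf n y • ((fderiv ℝ u (Ff n y)).comp (Ff' n y)) +
    u (Ff n y) • ((gam n y) • innerSL ℝ (Wf n y))

lemma hasFDerivAt_v (y : Eu n) (hy : 0 < df n y) (hu : DifferentiableAt ℝ u (Ff n y)) :
    HasFDerivAt (fun x => Gf n x * u (Ff n x)) (Dv n u y) y :=
  (hasFDerivAt_Gf y hy).mul (hu.hasFDerivAt.comp y (hasFDerivAt_Ff y hy.ne'))

lemma Dv_apply (y b : Eu n) :
    Dv n u y b = Gf n y * (4 * (df n y)⁻¹ * (fderiv ℝ u (Ff n y)) b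
        + -8 * ((df n y)⁻¹ * (df n y)⁻¹) * ⟪Wf n y, b⟫ * (fderiv ℝ u (Ff n y)) (Wf n y))
      + u (Ff n y) * (gam n y * ⟪Wf n y, b⟫) := by
  simp only [Dv, ContinuousLinearMap.add_apply, ContinuousLinearMap.smul_apply,
    ContinuousLinearMap.comp_apply, innerSL_apply_apply, smul_eq_mul, Ff'_apply, map_add, _root_.map_smul]
  ring

lemma fderiv_Dv_single (z : Eu n) (hdz : 0 < df n z)
    (hu1 : DifferentiableAt ℝ u (Ff n z))
    (U2 : Eu n →L[ℝ] Eu n →L[ℝ] ℝ)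
    (hu2 : HasFDerivAt (fderiv ℝ u) U2 (Ff n z)) (b : Eu n) :
    fderiv ℝ (fun y => Dv n u y b) z b =
      gam n z * ⟪Wf n z, b⟫ * (4 * (df n z)⁻¹ * (fderiv ℝ u (Ff n z) b)
          + (-8 * ((df n z)⁻¹ * (df n z)⁻¹) * ⟪Wf n z, b⟫) * (fderiv ℝ u (Ff n z) (Wf n z)))
      + Gf n z * ( (-8 * ((df n z)⁻¹ * (df n z)⁻¹) * ⟪Wf n z, b⟫) * (fderiv ℝ u (Ff n z) b)
          + 4 * (df n z)⁻¹ * (4 * (df n z)⁻¹ * (U2 b b)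
              + (-8 * ((df n z)⁻¹ * (df n z)⁻¹) * ⟪Wf n z, b⟫) * (U2 (Wf n z) b))
          + (32 * ((df n z)⁻¹ * (df n z)⁻¹ * (df n z)⁻¹) * (⟪Wf n z, b⟫ * ⟪Wf n z, b⟫)
              + (-8 * ((df n z)⁻¹ * (df n z)⁻¹)) * ⟪b, b⟫) * (fderiv ℝ u (Ff n z) (Wf n z))
          + (-8 * ((df n z)⁻¹ * (df n z)⁻¹) * ⟪Wf n z, b⟫) * ((fderiv ℝ u (Ff n z) b)
              + 4 * (df n z)⁻¹ * (U2 b (Wf n z))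
              + (-8 * ((df n z)⁻¹ * (df n z)⁻¹) * ⟪Wf n z, b⟫) * (U2 (Wf n z) (Wf n z))))
      + (4 * (df n z)⁻¹ * (fderiv ℝ u (Ff n z) b)
          + (-8 * ((df n z)⁻¹ * (df n z)⁻¹) * ⟪Wf n z, b⟫) * (fderiv ℝ u (Ff n z) (Wf n z)))
          * (gam n z * ⟪Wf n z, b⟫)
      + u (Ff n z) * (dgam n z * (⟪Wf n z, b⟫ * ⟪Wf n z, b⟫) + gam n z * ⟪b, b⟫) := by
  have hd : df n z ≠ 0 := hdz.ne'
  have hFf := hasFDerivAt_Ff z hd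
  have h1 : HasFDerivAt (fun y => fderiv ℝ u (Ff n y)) (U2.comp (Ff' n z)) z :=
    hu2.comp z hFf
  have hPb := h1.clm_apply (hasFDerivAt_const b z)
  have hT := h1.clm_apply (hasFDerivAt_Wf z)
  have hQ := (hu1.hasFDerivAt).comp z hFf
  have hc1 := (hasFDerivAt_dinv z hd).const_mul (4:ℝ)
  have hm8 := ((hasFDerivAt_dinv z hd).mul (hasFDerivAt_dinv z hd)).const_mul (-8:ℝ)
  have hA := hasFDerivAt_innerW z b
  have hγ := hasFDerivAt_gam z hdz
  have hG := hasFDerivAt_Gf z hdz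
  have HΦ := (hG.mul ((hc1.mul hPb).add ((hm8.mul hA).mul hT))).add (hQ.mul (hγ.mul hA))
  have HΦ' := HΦ.congr_of_eventuallyEq
    (Filter.Eventually.of_forall fun y => Dv_apply u y b)
  rw [HΦ'.fderiv]
  simp only [ContinuousLinearMap.add_apply, ContinuousLinearMap.smul_apply,
    ContinuousLinearMap.comp_apply, ContinuousLinearMap.flip_apply,
    ContinuousLinearMap.smulRight_apply, ContinuousLinearMap.id_apply,
    ContinuousLinearMap.zero_apply, ContinuousLinearMap.one_apply, map_zero,
    innerSL_apply_apply, smul_eq_mul, Ff'_apply, map_add, _root_.map_smul, Function.comp_apply, Pi.mul_apply, Pi.add_apply]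
  ring

end withU

lemma sum_fderiv_Dv (u : Eu n → ℝ) (z : Eu n) (hdz : 0 < df n z)
    (hu1 : DifferentiableAt ℝ u (Ff n z))
    (U2 : Eu n →L[ℝ] Eu n →L[ℝ] ℝ)
    (hu2 : HasFDerivAt (fderiv ℝ u) U2 (Ff n z))
    (hlap : ∑ i, U2 (EuclideanSpace.single i 1) (EuclideanSpace.single i 1) = 0) :
    ∑ i, fderiv ℝ (fun y => Dv n u y (EuclideanSpace.single i 1)) z
      (EuclideanSpace.single i 1) = 0 := by
  have hd : df n z ≠ 0 := hdz.ne'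
  set W := Wf n z with hW
  set I := (df n z)⁻¹ with hI
  set G := Gf n z with hG
  set γ := gam n z with hγ
  set g3 := dgam n z with hg3
  set U1 := fderiv ℝ u (Ff n z) with hU1
  set U := u (Ff n z) with hU
  have hsummand : ∀ i : Fin (n+1),
      fderiv ℝ (fun y => Dv n u y (EuclideanSpace.single i 1)) z (EuclideanSpace.single i 1)
      = (8*I*γ - 16*G*I^2) * (W i * U1 (EuclideanSpace.single i 1))
        + (16*G*I^2) * (U2 (EuclideanSpace.single i 1) (EuclideanSpace.single i 1))
        + (-32*G*I^3) * (W i * (U2 W) (EuclideanSpace.single i 1))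
        + (-32*G*I^3) * (W i * (U2 (EuclideanSpace.single i 1)) W)
        + (-16*I^2*γ*(U1 W) + 32*G*I^3*(U1 W) + 64*G*I^4*(U2 W W) + U*g3) * (W i * W i)
        + (-8*G*I^2*(U1 W) + U*γ) := by
    intro i
    rw [fderiv_Dv_single u z hdz hu1 U2 hu2, inner_W_single, inner_bb]
    ring
  rw [Finset.sum_congr rfl fun i _ => hsummand i]
  rw [Finset.sum_add_distrib, Finset.sum_add_distrib, Finset.sum_add_distrib,
    Finset.sum_add_distrib, Finset.sum_add_distrib]
  rw [← Finset.mul_sum, ← Finset.mul_sum, ← Finset.mul_sum, ← Finset.mul_sum, ← Finset.mul_sum]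
  have e1 : ∑ i, W i * U1 (EuclideanSpace.single i 1) = U1 W := sum_single_apply U1 W
  have e2 : ∑ i, W i * (U2 W) (EuclideanSpace.single i 1) = U2 W W := sum_single_apply (U2 W) W
  have e3 : ∑ i, W i * (U2 (EuclideanSpace.single i 1)) W = U2 W W := by
    have := sum_single_apply (U2.flip W) W
    simpa using this
  have e4 : ∑ i, W i * W i = df n z := sum_W_sq z
  have e5 : ∑ _i : Fin (n+1), (-8*G*I^2*(U1 W) + U*γ) = ((n:ℝ)+1) * (-8*G*I^2*(U1 W) + U*γ) := by
    rw [Finset.sum_const]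
    simp [Finset.card_univ]
    ring
  rw [e1, e2, e3, e4, hlap, e5]
  simp only [hγ, hg3, dgam, gam, rr, ← hI, ← hG]
  have hDI : df n z * I = 1 := mul_inv_cancel₀ hd
  field_simp
  linear_combination (I*(n:ℝ)^2*G*U - I*G*U + 16*I^2*(n:ℝ)*G*(U1 W) + 16*I^2*G*(U1 W)
    + 64*I^3*G*((U2 W) W)) * hDI

/-- **Conformal transfer of harmonicity.** If `u` is harmonic in the open unit ball, then
`v(z) = (4/((2 + z_{n+1})² + |z̄|²))^{(n-1)/2} u(Σ⁻¹(z))` is harmonic in the open upper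
half-space. -/
theorem harmonic_transfers_to_halfspace
    (n : ℕ) (hn : 2 ≤ n) (u : EuclideanSpace ℝ (Fin (n + 1)) → ℝ)
    (hu_smooth : ContDiffOn ℝ (⊤ : ℕ∞) u (ball (0 : EuclideanSpace ℝ (Fin (n + 1))) 1))
    (hu_harm : ∀ x ∈ ball (0 : EuclideanSpace ℝ (Fin (n + 1))) 1, lap u x = 0) :
    ∀ z : EuclideanSpace ℝ (Fin (n + 1)), 0 < z (Fin.last n) →
      lap (fun w => confFactor n w ^ (((n : ℝ) - 1) / 2) * u (SigmaInv n w)) z = 0 := by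
  intro z hz
  set S : Set (Eu n) := {y | 0 < y (Fin.last n)} with hSdef
  have hS : IsOpen S := isOpen_Ioi.preimage (PiLp.continuous_apply _ _ (Fin.last n))
  have hzS : z ∈ S := hz
  have hmem : ∀ y ∈ S, Ff n y ∈ ball (0 : Eu n) 1 := fun y hy => Ff_mem_ball y hy
  have hdiffu : ∀ y ∈ S, DifferentiableAt ℝ u (Ff n y) := by
    intro y hy
    exact ((hu_smooth.contDiffAt (isOpen_ball.mem_nhds (hmem y hy))).differentiableAt (by simp))
  have hTv : ∀ y ∈ S, confFactor n y ^ (((n : ℝ) - 1) / 2) * u (SigmaInv n y)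
      = Gf n y * u (Ff n y) := by
    intro y hy
    rw [confFactor_eq, SigmaInv_eq y (df_pos y (le_of_lt hy)).ne']
    rfl
  have hdz : 0 < df n z := df_pos z hz.le
  -- second derivative data for u at Ff n z
  have hca : ContDiffAt ℝ (⊤ : ℕ∞) u (Ff n z) :=
    hu_smooth.contDiffAt (isOpen_ball.mem_nhds (hmem z hzS))
  have hca1 : ContDiffAt ℝ (⊤ : ℕ∞) (fderiv ℝ u) (Ff n z) :=
    hca.fderiv_right (m := (⊤ : ℕ∞)) le_rfl
  have hu2 : HasFDerivAt (fderiv ℝ u) (fderiv ℝ (fderiv ℝ u) (Ff n z)) (Ff n z) :=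
    (hca1.differentiableAt (by simp)).hasFDerivAt
  set U2 := fderiv ℝ (fderiv ℝ u) (Ff n z) with hU2
  have hlap : ∑ i, U2 (EuclideanSpace.single i 1) (EuclideanSpace.single i 1) = 0 := by
    have h0 := hu_harm (Ff n z) (hmem z hzS)
    rw [lap] at h0
    rw [← h0]
    refine Finset.sum_congr rfl fun i _ => ?_
    rw [fderiv_clm_apply (hca1.differentiableAt (by simp)) (differentiableAt_const _)]
    simp
    rfl
  -- identify the two functions near z
  have hfd : ∀ i : Fin (n+1),
      fderiv ℝ (fun y => fderiv ℝ
          (fun w => confFactor n w ^ (((n : ℝ) - 1) / 2) * u (SigmaInv n w)) y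
          (EuclideanSpace.single i 1)) z (EuclideanSpace.single i 1)
      = fderiv ℝ (fun y => Dv n u y (EuclideanSpace.single i 1)) z
          (EuclideanSpace.single i 1) := by
    intro i
    have hev : (fun y => fderiv ℝ
        (fun w => confFactor n w ^ (((n : ℝ) - 1) / 2) * u (SigmaInv n w)) y
        (EuclideanSpace.single i 1))
        =ᶠ[nhds z] (fun y => Dv n u y (EuclideanSpace.single i 1)) := by
      filter_upwards [hS.mem_nhds hzS] with y hy
      have hev2 : (fun w => confFactor n w ^ (((n : ℝ) - 1) / 2) * u (SigmaInv n w))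
          =ᶠ[nhds y] (fun x => Gf n x * u (Ff n x)) :=
        Filter.eventually_of_mem (hS.mem_nhds hy) hTv
      rw [hev2.fderiv_eq, (hasFDerivAt_v u y (df_pos y hy.le) (hdiffu y hy)).fderiv]
    rw [hev.fderiv_eq]
  rw [lap]
  rw [Finset.sum_congr rfl fun i _ => hfd i]
  exact sum_fderiv_Dv u z hdz (hdiffu z hzS) U2 hu2 hlap
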